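/- arXiv:1905.02684 — 4 statements merged into one kernel-verified Lean document; each statement's English description precedes it below -/
import Mathlib

section
/- Let η > 0, ℓ ≥ 1, and define α(r, ℓ) = r·(1 - (1/(2η))·(2η·r)^(2^ℓ)) for r ≥ 0. Then α(·, ℓ) is strictly increasing on [0, ε̄(ℓ)) where ε̄(ℓ) = (2η)^((1/2^ℓ) - 1) · (1/(1 + 2^ℓ))^(1/2^ℓ). -/
/-! With `c = 2η` and `n = 2^ℓ`, `α(r) = r - c^(n-1) r^(n+1)`, whose derivative
`1 - (n+1) c^(n-1) r^n` is positive for `0 ≤ r` below its unique positive zero, which is `ε̄(ℓ)`. -/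

open Set

theorem strictMonoOn_sub_mul_pow_succ {K a : ℝ} {n : ℕ} (hK : 0 < K) (hn : n ≠ 0)
    (ha : K * (n + 1) * a ^ n ≤ 1) :
    StrictMonoOn (fun r : ℝ => r - K * r ^ (n + 1)) (Icc 0 a) := by
  refine strictMonoOn_of_deriv_pos (convex_Icc 0 a) (by fun_prop) fun x hx => ?_
  rw [interior_Icc] at hx
  have hderiv : HasDerivAt (fun r : ℝ => r - K * r ^ (n + 1)) (1 - K * ((n + 1) * x ^ n)) x := by
    simpa using (hasDerivAt_id' x).fun_sub ((hasDerivAt_pow (n + 1) x).const_mul K)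
  have hxa : x ^ n < a ^ n := pow_lt_pow_left₀ hx.2 hx.1.le hn
  have : K * (n + 1) * x ^ n < K * (n + 1) * a ^ n := by gcongr
  rw [hderiv.deriv]
  linarith

theorem pow_div_self_mul_succ_mul_rpow_pow {c : ℝ} (hc : 0 < c) {n : ℕ} (hn : n ≠ 0) :
    c ^ n / c * (n + 1) * (c ^ ((1 : ℝ) / n - 1) * (1 / (1 + n)) ^ ((1 : ℝ) / n)) ^ n = 1 := by
  rw [Real.rpow_sub hc, Real.rpow_one, div_mul_eq_mul_div, mul_pow, div_pow, one_div (n : ℝ),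
    Real.rpow_inv_natCast_pow hc.le hn, Real.rpow_inv_natCast_pow (by positivity) hn]
  field_simp
  ring

theorem strictMonoOn_mul_one_sub_pow {c : ℝ} (hc : 0 < c) {n : ℕ} (hn : n ≠ 0) :
    StrictMonoOn (fun r : ℝ => r * (1 - (1 / c) * (c * r) ^ n))
      (Icc 0 (c ^ ((1 : ℝ) / n - 1) * (1 / (1 + n)) ^ ((1 : ℝ) / n))) := by
  have hfun : (fun r : ℝ => r * (1 - (1 / c) * (c * r) ^ n))
      = fun r : ℝ => r - c ^ n / c * r ^ (n + 1) := by
    funext r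
    rw [mul_pow]
    field_simp
    ring
  rw [hfun]
  exact strictMonoOn_sub_mul_pow_succ (by positivity) hn
    (pow_div_self_mul_succ_mul_rpow_pow hc hn).le

theorem sspc_alpha_strict_mono_general (η : ℝ) (hη : 0 < η) (ℓ : ℕ) :
    StrictMonoOn (fun r : ℝ => r * (1 - (1 / (2 * η)) * (2 * η * r) ^ (2 ^ ℓ)))
      (Set.Ico 0 ((2 * η) ^ ((1 : ℝ) / 2 ^ ℓ - 1) *
        (1 / (1 + (2 : ℝ) ^ ℓ)) ^ ((1 : ℝ) / 2 ^ ℓ))) := by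
  have h := strictMonoOn_mul_one_sub_pow (by positivity : 0 < 2 * η) (pow_ne_zero ℓ two_ne_zero)
  push_cast at h
  exact h.mono Ico_subset_Icc_self

theorem sspc_alpha_strict_mono (η : ℝ) (hη : 0 < η) (ℓ : ℕ) (hℓ : 1 ≤ ℓ) :
    StrictMonoOn (fun r : ℝ => r * (1 - (1 / (2 * η)) * (2 * η * r) ^ (2 ^ ℓ)))
      (Set.Ico 0 ((2 * η) ^ ((1 : ℝ) / 2 ^ ℓ - 1) *
        (1 / (1 + (2 : ℝ) ^ ℓ)) ^ ((1 : ℝ) / 2 ^ ℓ))) :=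
  sspc_alpha_strict_mono_general η hη ℓ
end

section
/- Suppose V : ℝⁿ → ℝ is continuous, α₁, α₂ are strictly increasing continuous functions vanishing at 0 with α₁(‖x‖) ≤ V(x) ≤ α₂(‖x‖) for all x, and along trajectories of x_{k+1} = f(x_k, u_k) we have V(f(x,u)) - V(x) ≤ -c·V(x) + σ(‖u‖) with c ∈ (0,1) and σ strictly increasing with σ(0)=0. If the inputs satisfy ‖u_k‖ ≤ r for all k, then for every solution, limsup_{k→∞} V(x_k) ≤ σ(r)/c. -/
/-! A dissipation inequality `V(x_{k+1}) ≤ (1 - c) V(x_k) + σ(r)` makes `V(x_k) - σ(r)/c` decay at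
least geometrically with ratio `1 - c`, since `σ(r)/c` is the fixed point of `v ↦ (1 - c) v + σ(r)`.
As `V ≥ α₁(0) = 0`, the sequence `V(x_k)` is bounded below, so its limsup is a genuine one and is at
most `σ(r)/c`. -/

open Filter

theorem le_add_pow_mul_sub_of_le_mul_add {v : ℕ → ℝ} {a b L : ℝ} (ha : 0 ≤ a)
    (hL : a * L + b = L) (hstep : ∀ k, v (k + 1) ≤ a * v k + b) (k : ℕ) :
    v k ≤ L + a ^ k * (v 0 - L) := by
  induction k with
  | zero => simp
  | succ k ih =>
    calc v (k + 1) ≤ a * v k + b := hstep k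
      _ ≤ a * (L + a ^ k * (v 0 - L)) + b := by gcongr
      _ = L + a ^ (k + 1) * (v 0 - L) := by rw [pow_succ]; linear_combination hL

theorem limsup_le_div_of_le_mul_add {v : ℕ → ℝ} {a b : ℝ} (ha₀ : 0 ≤ a) (ha₁ : a < 1)
    (hv : IsCoboundedUnder (· ≤ ·) atTop v) (hstep : ∀ k, v (k + 1) ≤ a * v k + b) :
    limsup v atTop ≤ b / (1 - a) := by
  set L := b / (1 - a)
  have hL : a * L + b = L := by
    simp only [L]
    field_simp [(sub_pos.2 ha₁).ne']
    ring
  have hbound : Tendsto (fun k => L + a ^ k * (v 0 - L)) atTop (nhds L) := by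
    simpa using ((tendsto_pow_atTop_nhds_zero_of_lt_one ha₀ ha₁).mul_const (v 0 - L)).const_add L
  calc limsup v atTop ≤ limsup (fun k => L + a ^ k * (v 0 - L)) atTop :=
        limsup_le_limsup (.of_forall (le_add_pow_mul_sub_of_le_mul_add ha₀ hL hstep)) hv
          hbound.isBoundedUnder_le
    _ = L := hbound.limsup_eq

theorem iss_lyapunov_limsup_general (n m : ℕ)
    (f : EuclideanSpace ℝ (Fin n) → EuclideanSpace ℝ (Fin m) → EuclideanSpace ℝ (Fin n))
    (V : EuclideanSpace ℝ (Fin n) → ℝ)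
    (α₁ α₂ σ : ℝ → ℝ)
    (hα₁ : StrictMonoOn α₁ (Set.Ici 0)) (hα₁0 : α₁ 0 = 0)
    (hσ : StrictMonoOn σ (Set.Ici 0))
    (hsandwich : ∀ x, α₁ ‖x‖ ≤ V x ∧ V x ≤ α₂ ‖x‖)
    (c : ℝ) (hc : c ∈ Set.Ioo (0 : ℝ) 1)
    (hdecay : ∀ x u, V (f x u) - V x ≤ -c * V x + σ ‖u‖)
    (x : ℕ → EuclideanSpace ℝ (Fin n)) (u : ℕ → EuclideanSpace ℝ (Fin m))
    (htraj : ∀ k, x (k + 1) = f (x k) (u k))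
    (r : ℝ) (hr : 0 ≤ r) (hu : ∀ k, ‖u k‖ ≤ r) :
    Filter.limsup (fun k => V (x k)) Filter.atTop ≤ σ r / c := by
  obtain ⟨hc₀, hc₁⟩ := hc
  have hV_nonneg : ∀ k, 0 ≤ V (x k) := fun k =>
    calc 0 = α₁ 0 := hα₁0.symm
      _ ≤ α₁ ‖x k‖ := hα₁.monotoneOn Set.self_mem_Ici (norm_nonneg _) (norm_nonneg _)
      _ ≤ V (x k) := (hsandwich (x k)).1
  have hstep : ∀ k, V (x (k + 1)) ≤ (1 - c) * V (x k) + σ r := fun k => by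
    have hσu : σ ‖u k‖ ≤ σ r := hσ.monotoneOn (norm_nonneg _) hr (hu k)
    rw [htraj k]
    linarith [hdecay (x k) (u k)]
  have := limsup_le_div_of_le_mul_add (sub_nonneg.2 hc₁.le) (sub_lt_self 1 hc₀)
    (isCoboundedUnder_le_of_le atTop hV_nonneg) hstep
  rwa [sub_sub_cancel] at this

theorem iss_lyapunov_limsup (n m : ℕ)
    (f : EuclideanSpace ℝ (Fin n) → EuclideanSpace ℝ (Fin m) → EuclideanSpace ℝ (Fin n))
    (V : EuclideanSpace ℝ (Fin n) → ℝ) (hV : Continuous V)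
    (α₁ α₂ σ : ℝ → ℝ)
    (hα₁ : StrictMonoOn α₁ (Set.Ici 0)) (hα₁c : Continuous α₁) (hα₁0 : α₁ 0 = 0)
    (hα₂ : StrictMonoOn α₂ (Set.Ici 0)) (hα₂c : Continuous α₂) (hα₂0 : α₂ 0 = 0)
    (hσ : StrictMonoOn σ (Set.Ici 0)) (hσc : Continuous σ) (hσ0 : σ 0 = 0)
    (hsandwich : ∀ x, α₁ ‖x‖ ≤ V x ∧ V x ≤ α₂ ‖x‖)
    (c : ℝ) (hc : c ∈ Set.Ioo (0 : ℝ) 1)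
    (hdecay : ∀ x u, V (f x u) - V x ≤ -c * V x + σ ‖u‖)
    (x : ℕ → EuclideanSpace ℝ (Fin n)) (u : ℕ → EuclideanSpace ℝ (Fin m))
    (htraj : ∀ k, x (k + 1) = f (x k) (u k))
    (r : ℝ) (hr : 0 ≤ r) (hu : ∀ k, ‖u k‖ ≤ r) :
    Filter.limsup (fun k => V (x k)) Filter.atTop ≤ σ r / c :=
  iss_lyapunov_limsup_general n m f V α₁ α₂ σ hα₁ hα₁0 hσ hsandwich c hc hdecay x u htraj r hr hu
end

section
/- Small-gain theorem for asymptotic gains (scalar sequence version): let (x_k), (e_k) be nonnegative sequences that are bounded, and let γ₁, γ₂ : ℝ≥0 → ℝ≥0 be continuous nondecreasing functions with γ₁(0) = γ₂(0) = 0 such that limsup x_k ≤ γ₁(limsup e_k) and limsup e_k ≤ γ₂(limsup x_k). If γ₁(γ₂(s)) < s for all s > 0, then limsup x_k = 0 and limsup e_k = 0, i.e., both sequences converge to 0. -/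
/-! The composite gain bounds `limsup x` by `γ₁ (γ₂ (limsup x))`, which is impossible for a
positive value under the small-gain condition; hence `limsup x = 0`, then `limsup e ≤ γ₂ 0 = 0`. -/

open Filter Topology

section

variable {α : Type*} {l : Filter α} [NeBot l] {u : α → ℝ}

theorem limsup_nonneg_of_eventually_nonneg (h0 : ∀ᶠ a in l, 0 ≤ u a)
    (hbdd : IsBoundedUnder (· ≤ ·) l u) : 0 ≤ limsup u l :=
  le_limsup_of_frequently_le h0.frequently hbdd

theorem tendsto_zero_of_eventually_nonneg_of_limsup_eq_zero (h0 : ∀ᶠ a in l, 0 ≤ u a)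
    (hbdd : IsBoundedUnder (· ≤ ·) l u) (hlim : limsup u l = 0) : Tendsto u l (𝓝 0) :=
  tendsto_of_le_liminf_of_limsup_le (le_liminf_of_le hbdd.isCoboundedUnder_ge h0) hlim.le hbdd
    (isBoundedUnder_of_eventually_ge h0)

end

theorem eq_zero_and_eq_zero_of_small_gain {γ₁ γ₂ : ℝ → ℝ} (hγ₁m : Monotone γ₁)
    (hγ₂0 : γ₂ 0 = 0) (hsg : ∀ s : ℝ, 0 < s → γ₁ (γ₂ s) < s) {X E : ℝ} (hX : 0 ≤ X)
    (hE : 0 ≤ E) (h₁ : X ≤ γ₁ E) (h₂ : E ≤ γ₂ X) : X = 0 ∧ E = 0 := by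
  have hX0 : X = 0 := by
    refine le_antisymm (not_lt.1 fun hpos => ?_) hX
    exact (h₁.trans (hγ₁m h₂)).not_gt (hsg X hpos)
  refine ⟨hX0, le_antisymm ?_ hE⟩
  simpa [hX0, hγ₂0] using h₂

theorem small_gain_theorem_general (x e : ℕ → ℝ)
    (hx : ∀ k, 0 ≤ x k) (he : ∀ k, 0 ≤ e k)
    (hxb : ∃ M, ∀ k, x k ≤ M) (heb : ∃ M, ∀ k, e k ≤ M)
    (γ₁ γ₂ : ℝ → ℝ)
    (hγ₁m : Monotone γ₁)
    (hγ₂0 : γ₂ 0 = 0)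
    (hg1 : Filter.limsup x Filter.atTop ≤ γ₁ (Filter.limsup e Filter.atTop))
    (hg2 : Filter.limsup e Filter.atTop ≤ γ₂ (Filter.limsup x Filter.atTop))
    (hsg : ∀ s : ℝ, 0 < s → γ₁ (γ₂ s) < s) :
    Filter.limsup x Filter.atTop = 0 ∧ Filter.limsup e Filter.atTop = 0 ∧
      Filter.Tendsto x Filter.atTop (nhds 0) ∧ Filter.Tendsto e Filter.atTop (nhds 0) := by
  have hx' : ∀ᶠ k in atTop, 0 ≤ x k := Eventually.of_forall hx
  have he' : ∀ᶠ k in atTop, 0 ≤ e k := Eventually.of_forall he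
  have hxbdd : IsBoundedUnder (· ≤ ·) atTop x := isBoundedUnder_of hxb
  have hebdd : IsBoundedUnder (· ≤ ·) atTop e := isBoundedUnder_of heb
  obtain ⟨hX, hE⟩ := eq_zero_and_eq_zero_of_small_gain hγ₁m hγ₂0 hsg
    (limsup_nonneg_of_eventually_nonneg hx' hxbdd)
    (limsup_nonneg_of_eventually_nonneg he' hebdd) hg1 hg2
  exact ⟨hX, hE, tendsto_zero_of_eventually_nonneg_of_limsup_eq_zero hx' hxbdd hX,
    tendsto_zero_of_eventually_nonneg_of_limsup_eq_zero he' hebdd hE⟩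

theorem small_gain_theorem (x e : ℕ → ℝ)
    (hx : ∀ k, 0 ≤ x k) (he : ∀ k, 0 ≤ e k)
    (hxb : ∃ M, ∀ k, x k ≤ M) (heb : ∃ M, ∀ k, e k ≤ M)
    (γ₁ γ₂ : ℝ → ℝ) (hγ₁c : Continuous γ₁) (hγ₂c : Continuous γ₂)
    (hγ₁m : Monotone γ₁) (hγ₂m : Monotone γ₂)
    (hγ₁0 : γ₁ 0 = 0) (hγ₂0 : γ₂ 0 = 0)
    (hg1 : Filter.limsup x Filter.atTop ≤ γ₁ (Filter.limsup e Filter.atTop))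
    (hg2 : Filter.limsup e Filter.atTop ≤ γ₂ (Filter.limsup x Filter.atTop))
    (hsg : ∀ s : ℝ, 0 < s → γ₁ (γ₂ s) < s) :
    Filter.limsup x Filter.atTop = 0 ∧ Filter.limsup e Filter.atTop = 0 ∧
      Filter.Tendsto x Filter.atTop (nhds 0) ∧ Filter.Tendsto e Filter.atTop (nhds 0) :=
  small_gain_theorem_general x e hx he hxb heb γ₁ γ₂ hγ₁m hγ₂0 hg1 hg2 hsg
end

section
/- For any real numbers a, b the Fischer-Burmeister function satisfies the bound |ψ(a,b)|·(2 + √2)⁻¹ ≤ ‖(min(a,b,0), max(0, min(a,b)))‖ in the following simpler form: (2 - √2)·|min(a,b)| ≤ |ψ(a,b)| ≤ (2 + √2)·|min(a,b)|, i.e., ψ is equivalent to the min NCP function up to multiplicative constants. -/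
/-!
The Fischer-Burmeister function `ψ a b = a + b - √(a² + b²)` is nondecreasing in each argument
(because `x ↦ √(x² + b²)` is `1`-Lipschitz) and satisfies `ψ a b ≤ min a b` (because
`√(a² + b²) ≥ |a|, |b|`). With `m = min a b` this sandwiches `ψ a b` between
`ψ m m = 2m - √2 |m|` and `m`; reading off absolute values according to the sign of `m` gives
`(2 - √2) |m| ≤ |ψ a b| ≤ |m|` for `m ≥ 0` and `|m| ≤ |ψ a b| ≤ (2 + √2) |m|` for `m < 0`.
-/

open Real

lemma sqrt_sq_add_sq_sub_le {x x' : ℝ} (y : ℝ) (hx : x ≤ x') :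
    √(x' ^ 2 + y ^ 2) - √(x ^ 2 + y ^ 2) ≤ x' - x := by
  set s := √(x ^ 2 + y ^ 2)
  have hxs : |x| ≤ s := abs_le_sqrt (by nlinarith)
  have hs : s ^ 2 = x ^ 2 + y ^ 2 := sq_sqrt (by positivity)
  rw [sub_le_iff_le_add, sqrt_le_left (by linarith [abs_nonneg x])]
  nlinarith [le_abs_self x]

lemma abs_bounds_of_sandwich {x m : ℝ} (hlow : 2 * m - √2 * |m| ≤ x) (hup : x ≤ m) :
    (2 - √2) * |m| ≤ |x| ∧ |x| ≤ (2 + √2) * |m| := by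
  have one_le_sqrt_two : 1 ≤ √2 := one_le_sqrt.mpr one_le_two
  have sqrt_two_le_two : √2 ≤ 2 := sqrt_le_left zero_le_two |>.mpr (by norm_num)
  rcases le_or_gt 0 m with hm | hm
  · rw [abs_of_nonneg hm] at hlow ⊢
    rw [abs_of_nonneg (by nlinarith)]
    constructor <;> nlinarith
  · rw [abs_of_neg hm] at hlow ⊢
    rw [abs_of_neg (by linarith)]
    constructor <;> nlinarith

noncomputable def fischerBurmeister (a b : ℝ) : ℝ := a + b - √(a ^ 2 + b ^ 2)

lemma fischerBurmeister_comm (a b : ℝ) : fischerBurmeister a b = fischerBurmeister b a := by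
  simp only [fischerBurmeister, add_comm]

lemma fischerBurmeister_self (m : ℝ) : fischerBurmeister m m = 2 * m - √2 * |m| := by
  rw [fischerBurmeister, ← two_mul, ← two_mul, sqrt_mul zero_le_two, sqrt_sq_eq_abs]

lemma fischerBurmeister_le_right (a b : ℝ) : fischerBurmeister a b ≤ b := by
  have : |a| ≤ √(a ^ 2 + b ^ 2) := abs_le_sqrt (by nlinarith)
  rw [fischerBurmeister]
  linarith [le_abs_self a]

lemma fischerBurmeister_le_min (a b : ℝ) : fischerBurmeister a b ≤ min a b :=
  le_min (fischerBurmeister_comm a b ▸ fischerBurmeister_le_right b a)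
    (fischerBurmeister_le_right a b)

lemma fischerBurmeister_mono_left {a a' : ℝ} (b : ℝ) (ha : a ≤ a') :
    fischerBurmeister a b ≤ fischerBurmeister a' b := by
  have := sqrt_sq_add_sq_sub_le b ha
  simp only [fischerBurmeister]
  linarith

lemma fischerBurmeister_mono {a a' b b' : ℝ} (ha : a ≤ a') (hb : b ≤ b') :
    fischerBurmeister a b ≤ fischerBurmeister a' b' :=
  calc fischerBurmeister a b ≤ fischerBurmeister a' b := fischerBurmeister_mono_left b ha
    _ = fischerBurmeister b a' := fischerBurmeister_comm _ _
    _ ≤ fischerBurmeister b' a' := fischerBurmeister_mono_left a' hb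
    _ = fischerBurmeister a' b' := fischerBurmeister_comm _ _

lemma fischerBurmeister_self_min_le (a b : ℝ) :
    fischerBurmeister (min a b) (min a b) ≤ fischerBurmeister a b :=
  fischerBurmeister_mono (min_le_left a b) (min_le_right a b)

theorem fischer_burmeister_min_equiv (a b : ℝ) :
    (2 - Real.sqrt 2) * |min a b| ≤ |a + b - Real.sqrt (a ^ 2 + b ^ 2)| ∧
      |a + b - Real.sqrt (a ^ 2 + b ^ 2)| ≤ (2 + Real.sqrt 2) * |min a b| := by
  have hlow := fischerBurmeister_self_min_le a b
  rw [fischerBurmeister_self] at hlow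
  exact abs_bounds_of_sandwich hlow (fischerBurmeister_le_min a b)
end
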